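/- arXiv:2003.00589 — 4 statements merged into one kernel-verified Lean document; each statement's English description precedes it below -/
import Mathlib

section
/- Define ℓ_n recursively by ℓ_0 = 3 and ℓ_{n+1} = 1 + Σ_{j=0}^{n} (-1)^j * binom(ℓ_{n-j}, j+2). Then for each fixed n ≥ 0, the terms binom(ℓ_{n-j}, j+2) occurring in this sum are nonincreasing as j runs from 0 to n. -/
/-! Write `L n = (ℓ n).toNat`. By strong induction, `L n ≤ L (n + 1)` and
`C(L n, 2) ≤ 2 L (n + 1)`. These give `C(L q, 3) ≤ C(L (q + 1), 2)`, and the identity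
`C(a, k + 1) (k + 1) = C(a, k) (a - k)` propagates this to `C(L q, k + 1) ≤ C(L (q + 1), k)`
for every `k ≥ 2`: that is the comparison of adjacent terms at level `q + k - 1`.
Conversely, once the terms at level `n` are antitone, the alternating sum is at least its
first two terms, so `ℓ (n + 1) ≥ 1 + C(L n, 2) - C(L (n - 1), 3)`. When `L (n - 1) ≥ 10`, the
quadratic bound makes `C(L (n - 1), 3)` at most half of `C(L n, 2)`, which closes the
induction; the values `3, 4, 6, 12, 48` start it. -/

open Finset

lemma choose_three_mul_le {x y : ℕ} (h : x.choose 2 ≤ 2 * y) :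
    x.choose 3 * 3 ≤ 2 * y * (x - 2) := by
  rw [Nat.choose_succ_right_eq]
  exact Nat.mul_le_mul_right _ h

lemma succ_choose_two_mul_two (y : ℕ) : (y + 1).choose 2 * 2 = (y + 1) * y := by
  rw [Nat.choose_succ_right_eq, Nat.choose_one_right, Nat.add_sub_cancel]

lemma choose_three_le_choose_two {a b : ℕ} (hab : a ≤ b) (h : a.choose 2 ≤ 2 * b) :
    a.choose 3 ≤ b.choose 2 := by
  rcases Nat.lt_or_ge a 3 with ha | ha
  · simp [Nat.choose_eq_zero_of_lt ha]
  obtain ⟨c, rfl⟩ : ∃ c, a = c + 2 := ⟨a - 2, by omega⟩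
  obtain ⟨d, rfl⟩ : ∃ d, b = d + 1 := ⟨b - 1, by omega⟩
  have h3 := choose_three_mul_le h
  have ha2 := succ_choose_two_mul_two (c + 1)
  have hb2 := succ_choose_two_mul_two d
  simp only [Nat.add_sub_cancel] at h3
  have : 4 * c ≤ 3 * d := by nlinarith
  nlinarith

lemma two_mul_choose_three_le_choose_two {x y : ℕ} (hx : 10 ≤ x) (hxy : x ≤ y)
    (h : x.choose 2 ≤ 2 * y) : 2 * x.choose 3 ≤ y.choose 2 := by
  obtain ⟨c, rfl⟩ : ∃ c, x = c + 2 := ⟨x - 2, by omega⟩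
  obtain ⟨d, rfl⟩ : ∃ d, y = d + 1 := ⟨y - 1, by omega⟩
  have h3 := choose_three_mul_le h
  have hx2 := succ_choose_two_mul_two (c + 1)
  have hy2 := succ_choose_two_mul_two d
  simp only [Nat.add_sub_cancel] at h3
  have : 8 * c ≤ 3 * d := by nlinarith
  nlinarith

lemma choose_succ_le_choose {a b k : ℕ} (hab : a ≤ b + 1) (h3 : a.choose 3 ≤ b.choose 2)
    (hk : 2 ≤ k) : a.choose (k + 1) ≤ b.choose k := by
  induction k, hk using Nat.le_induction with
  | base => exact h3
  | succ k _ ih =>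
    refine Nat.le_of_mul_le_mul_right (c := k + 1) ?_ k.succ_pos
    calc a.choose (k + 2) * (k + 1)
        ≤ a.choose (k + 2) * (k + 2) := Nat.mul_le_mul_left _ (Nat.le_succ _)
      _ = a.choose (k + 1) * (a - (k + 1)) := Nat.choose_succ_right_eq a (k + 1)
      _ ≤ b.choose k * (b - k) := Nat.mul_le_mul ih (by omega)
      _ = b.choose (k + 1) * (k + 1) := (Nat.choose_succ_right_eq b k).symm

theorem antitoneOn_choose_sub {L : ℕ → ℕ} {n : ℕ}
    (hL : ∀ q < n, L q ≤ L (q + 1) ∧ (L q).choose 2 ≤ 2 * L (q + 1)) :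
    AntitoneOn (fun j ↦ (L (n - j)).choose (j + 2)) (Set.Iic n) := by
  refine antitoneOn_of_succ_le Set.ordConnected_Iic fun j _ _ hj ↦ ?_
  simp only [Order.succ_eq_add_one, Set.mem_Iic] at hj ⊢
  obtain ⟨q, hq, hqj⟩ : ∃ q, q < n ∧ n - j = q + 1 := ⟨n - (j + 1), by omega, by omega⟩
  obtain ⟨hmono, hquad⟩ := hL q hq
  rw [hqj, show n - (j + 1) = q by omega]
  exact choose_succ_le_choose (by omega) (choose_three_le_choose_two hmono hquad) (by omega)

lemma AntitoneOn.comp_add_one {α : Type*} [Preorder α] {t : ℕ → α} {n : ℕ}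
    (ht : AntitoneOn t (Set.Iic (n + 1))) : AntitoneOn (fun j ↦ t (j + 1)) (Set.Iic n) :=
  fun _ ha _ hb hab ↦ ht (by simpa using ha) (by simpa using hb) (by omega)

lemma sum_range_succ_alternating {R : Type*} [CommRing R] (f : ℕ → R) (n : ℕ) :
    ∑ j ∈ range (n + 1), (-1) ^ j * f j = f 0 - ∑ j ∈ range n, (-1) ^ j * f (j + 1) := by
  rw [sum_range_succ', sub_eq_add_neg, add_comm, ← sum_neg_distrib]
  simp [pow_succ]

lemma sum_range_alternating_mem_Icc {t : ℕ → ℕ} {n : ℕ} (ht : AntitoneOn t (Set.Iic n)) :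
    0 ≤ ∑ j ∈ range (n + 1), (-1) ^ j * (t j : ℤ) ∧
      ∑ j ∈ range (n + 1), (-1) ^ j * (t j : ℤ) ≤ t 0 := by
  induction n generalizing t with
  | zero => simp
  | succ n ih =>
    have h10 : t 1 ≤ t 0 := ht (by simp) (by simp) zero_le_one
    obtain ⟨lo, hi⟩ := ih ht.comp_add_one
    rw [zero_add] at hi
    rw [sum_range_succ_alternating]
    constructor <;> omega

lemma sub_le_sum_range_alternating {t : ℕ → ℕ} {n : ℕ} (ht : AntitoneOn t (Set.Iic (n + 1))) :
    (t 0 : ℤ) - t 1 ≤ ∑ j ∈ range (n + 2), (-1) ^ j * (t j : ℤ) := by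
  rw [sum_range_succ_alternating]
  linarith [(sum_range_alternating_mem_Icc ht.comp_add_one).2]

lemma le_and_choose_two_le_of_lower_bound {x y : ℕ} {z : ℤ} (hx : 10 ≤ x) (hxy : x ≤ y)
    (h : x.choose 2 ≤ 2 * y) (hz : (y.choose 2 : ℤ) - x.choose 3 + 1 ≤ z) :
    (y : ℤ) ≤ z ∧ (y.choose 2 : ℤ) ≤ 2 * z := by
  have h32 := two_mul_choose_three_le_choose_two hx hxy h
  obtain ⟨d, rfl⟩ : ∃ d, y = d + 1 := ⟨y - 1, by omega⟩
  have hy2 := succ_choose_two_mul_two d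
  have : 4 * (d + 1) ≤ (d + 1).choose 2 * 2 := by nlinarith
  constructor <;> omega

lemma ell_one_two_three_four {ℓ : ℕ → ℤ} (h0 : ℓ 0 = 3)
    (hrec : ∀ n : ℕ, ℓ (n + 1) =
      1 + ∑ j ∈ Finset.range (n + 1), (-1) ^ j * ((ℓ (n - j)).toNat.choose (j + 2) : ℤ)) :
    ℓ 1 = 4 ∧ ℓ 2 = 6 ∧ ℓ 3 = 12 ∧ ℓ 4 = 48 := by
  have e1 : ℓ 1 = 4 := by simp [hrec, h0]
  have e2 : ℓ 2 = 6 := by simp [hrec 1, sum_range_succ, h0, e1]; decide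
  have e3 : ℓ 3 = 12 := by simp [hrec 2, sum_range_succ, h0, e1, e2]; decide
  have e4 : ℓ 4 = 48 := by simp [hrec 3, sum_range_succ, h0, e1, e2, e3]; decide
  exact ⟨e1, e2, e3, e4⟩

lemma choose_two_sub_choose_three_le {ℓ : ℕ → ℤ}
    (hrec : ∀ n : ℕ, ℓ (n + 1) =
      1 + ∑ j ∈ Finset.range (n + 1), (-1) ^ j * ((ℓ (n - j)).toNat.choose (j + 2) : ℤ))
    (n : ℕ) (hanti : AntitoneOn (fun j ↦ (ℓ (n + 1 - j)).toNat.choose (j + 2)) (Set.Iic (n + 1))) :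
    ((ℓ (n + 1)).toNat.choose 2 : ℤ) - (ℓ n).toNat.choose 3 + 1 ≤ ℓ (n + 1 + 1) := by
  have h := sub_le_sum_range_alternating hanti
  simp only [Nat.sub_zero, Nat.add_sub_cancel, zero_add] at h
  rw [hrec (n + 1)]
  push_cast at h ⊢
  linarith

theorem toNat_le_and_choose_two_le {ℓ : ℕ → ℤ} (h0 : ℓ 0 = 3)
    (hrec : ∀ n : ℕ, ℓ (n + 1) =
      1 + ∑ j ∈ Finset.range (n + 1), (-1) ^ j * ((ℓ (n - j)).toNat.choose (j + 2) : ℤ))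
    (n : ℕ) :
    (ℓ n).toNat ≤ (ℓ (n + 1)).toNat ∧ (ℓ n).toNat.choose 2 ≤ 2 * (ℓ (n + 1)).toNat := by
  obtain ⟨e1, e2, e3, e4⟩ := ell_one_two_three_four h0 hrec
  induction n using Nat.strong_induction_on with
  | _ n ih =>
  rcases Nat.lt_or_ge n 4 with hn | hn
  · interval_cases n <;> simp [h0, e1, e2, e3, e4] <;> decide
  obtain ⟨m, rfl⟩ : ∃ m, n = m + 1 := ⟨n - 1, by omega⟩
  have hmono : MonotoneOn (fun q ↦ (ℓ q).toNat) (Set.Iic (m + 1)) :=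
    monotoneOn_of_le_succ Set.ordConnected_Iic fun q _ _ hq ↦
      (ih q (by simpa using hq)).1
  have hx : 10 ≤ (ℓ m).toNat := by
    have := hmono (a := 3) (b := m) (by simp; omega) (by simp) (by omega)
    simp only [e3] at this
    omega
  have hz := choose_two_sub_choose_three_le hrec m (antitoneOn_choose_sub ih)
  obtain ⟨h1, h2⟩ := le_and_choose_two_le_of_lower_bound hx (ih m (by omega)).1 (ih m (by omega)).2 hz
  have := Int.self_le_toNat (ℓ (m + 1 + 1))
  constructor <;> omega

theorem ell_terms_antitone (ℓ : ℕ → ℤ) (h0 : ℓ 0 = 3)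
    (hrec : ∀ n : ℕ, ℓ (n + 1) =
      1 + ∑ j ∈ Finset.range (n + 1), (-1) ^ j * ((ℓ (n - j)).toNat.choose (j + 2) : ℤ)) (n : ℕ) :
    ∀ i j : ℕ, i ≤ j → j ≤ n →
      (ℓ (n - j)).toNat.choose (j + 2) ≤ (ℓ (n - i)).toNat.choose (i + 2) := by
  intro i j hij hjn
  have hanti := antitoneOn_choose_sub (L := fun q ↦ (ℓ q).toNat) (n := n)
    fun q _ ↦ toNat_le_and_choose_two_le h0 hrec q
  exact hanti (Set.mem_Iic.mpr (hij.trans hjn)) (Set.mem_Iic.mpr hjn) hij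
end

section
/- Define ℓ_n recursively by ℓ_0 = 3 and ℓ_{n+1} = 1 + Σ_{j=0}^{n} (-1)^j * binom(ℓ_{n-j}, j+2). Then for all n ≥ 1, 3·2^(2^(n-1)) ≤ ℓ_{n+1}, and for all n ≥ 0, ℓ_{n+1} ≤ 2·2^(2^n). -/
/-!
Write the recurrence as `ℓ (n + 1) = 1 + ∑ j ≤ n, (-1) ^ j * t j` with
`t j = choose (ℓ (n - j)) (j + 2)`. If `b ^ 2 ≤ 3 * a` then `choose b (r + 1) ≤ choose a r` for
all `r ≥ 2`, so as long as `ℓ (m - 1) ^ 2 ≤ 3 * ℓ m` for `1 ≤ m ≤ n` the terms `t j` decrease and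
the alternating sum lies between `t 0 - t 1` and `t 0`. This gives
`ℓ n ^ 2 / 3 ≤ ℓ (n + 1) ≤ ℓ n ^ 2 / 2`, which propagates the hypothesis, and iterating the two
inequalities gives the doubly exponential bounds.
-/

open Finset

theorem alternating_sum_range_succ {R : Type*} [Ring R] (f : ℕ → R) (n : ℕ) :
    ∑ i ∈ range (n + 1), (-1) ^ i * f i = f 0 - ∑ i ∈ range n, (-1) ^ i * f (i + 1) := by
  simp [sum_range_succ', pow_succ, sub_eq_add_neg, add_comm]

section AlternatingSum

variable {R : Type*} [Ring R] [PartialOrder R] [IsOrderedRing R] {f : ℕ → R}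

theorem Antitone.alternating_sum_range_mem_Icc (hf : Antitone f) (hf₀ : ∀ i, 0 ≤ f i) (n : ℕ) :
    ∑ i ∈ range n, (-1) ^ i * f i ∈ Set.Icc 0 (f 0) := by
  induction n generalizing f with
  | zero => simpa using hf₀ 0
  | succ n ih =>
    obtain ⟨hnonneg, hle⟩ :=
      ih (f := fun i ↦ f (i + 1)) (fun _ _ h ↦ hf (by omega)) fun _ ↦ hf₀ _
    rw [alternating_sum_range_succ]
    exact ⟨sub_nonneg.2 (hle.trans (hf (Nat.zero_le 1))), sub_le_self _ hnonneg⟩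

theorem Antitone.alternating_sum_range_succ_mem_Icc (hf : Antitone f) (hf₀ : ∀ i, 0 ≤ f i)
    (n : ℕ) : ∑ i ∈ range (n + 1), (-1) ^ i * f i ∈ Set.Icc (f 0 - f 1) (f 0) := by
  obtain ⟨hnonneg, hle⟩ :=
    Antitone.alternating_sum_range_mem_Icc (f := fun i ↦ f (i + 1)) (fun _ _ h ↦ hf (by omega))
      (fun _ ↦ hf₀ _) n
  rw [alternating_sum_range_succ]
  exact ⟨sub_le_sub_left hle _, sub_le_self _ hnonneg⟩

end AlternatingSum

namespace Nat

section CastChoose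

variable {R : Type*} [CommRing R]

theorem cast_choose_two_mul (a : ℕ) : (a.choose 2 : R) * 2 = a * (a - 1) := by
  rw [← cast_descFactorial_two, descFactorial_eq_factorial_mul_choose, factorial_two, mul_comm]
  push_cast
  rfl

theorem cast_choose_three_mul (a : ℕ) : (a.choose 3 : R) * 6 = a * (a - 1) * (a - 2) := by
  rcases lt_or_ge a 3 with ha | ha
  · rw [choose_eq_zero_of_lt ha]
    interval_cases a <;> norm_num
  have h := descFactorial_eq_factorial_mul_choose a 3
  rw [descFactorial_succ, descFactorial_succ, descFactorial_one, show 3 ! = 6 from rfl] at h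
  have h' := congrArg (Nat.cast : ℕ → R) h
  push_cast [(by omega : 1 ≤ a), (by omega : 2 ≤ a)] at h'
  linear_combination -h'

end CastChoose

theorem choose_three_le_choose_two_of_sq_le {a b : ℕ} (h : b ^ 2 ≤ 3 * a) :
    b.choose 3 ≤ a.choose 2 := by
  rcases lt_or_ge b 3 with hb | hb
  · simp [choose_eq_zero_of_lt hb]
  have h2 := cast_choose_two_mul (R := ℤ) a
  have h3 := cast_choose_three_mul (R := ℤ) b
  have hb' : (3 : ℤ) ≤ b := by exact_mod_cast hb
  have h' : (b : ℤ) ^ 2 ≤ 3 * a := by exact_mod_cast h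
  have : (b.choose 3 : ℤ) ≤ a.choose 2 := by
    nlinarith [mul_nonneg (by linarith : (0 : ℤ) ≤ b) (by linarith : (0 : ℤ) ≤ b - 3),
      mul_nonneg (sub_nonneg.2 h') (by nlinarith : (0 : ℤ) ≤ 3 * a - 3 + b ^ 2)]
  exact_mod_cast this

theorem choose_add_two_le_choose_succ {a b k : ℕ} (hba : b ≤ a + 1)
    (h : b.choose (k + 1) ≤ a.choose k) : b.choose (k + 2) ≤ a.choose (k + 1) := by
  refine Nat.le_of_mul_le_mul_right ?_ k.succ_pos
  calc b.choose (k + 2) * (k + 1) ≤ b.choose (k + 2) * (k + 2) := by gcongr; omega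
    _ = b.choose (k + 1) * (b - (k + 1)) := choose_succ_right_eq b (k + 1)
    _ ≤ a.choose k * (a - k) := Nat.mul_le_mul h (by omega)
    _ = a.choose (k + 1) * (k + 1) := (choose_succ_right_eq a k).symm

theorem choose_succ_le_choose_of_sq_le {a b r : ℕ} (h : b ^ 2 ≤ 3 * a) (hr : 2 ≤ r) :
    b.choose (r + 1) ≤ a.choose r := by
  induction r, hr using Nat.le_induction with
  | base => exact choose_three_le_choose_two_of_sq_le h
  | succ k _ ih => exact choose_add_two_le_choose_succ (by nlinarith) ih

end Nat

theorem two_mul_le_sq_of_le_one_add_choose_two {a : ℕ} {z : ℤ} (ha : 2 ≤ a)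
    (hz : z ≤ 1 + a.choose 2) : 2 * z ≤ a ^ 2 := by
  have h2 := Nat.cast_choose_two_mul (R := ℤ) a
  have ha' : (2 : ℤ) ≤ a := by exact_mod_cast ha
  nlinarith

theorem sq_le_three_mul_of_one_add_choose_two_sub_choose_three_le {a b : ℕ} {z : ℤ}
    (hb : 7 ≤ b) (hba : b ^ 2 ≤ 3 * a) (hz : 1 + a.choose 2 - b.choose 3 ≤ z) :
    a ^ 2 ≤ 3 * z := by
  have h2 := Nat.cast_choose_two_mul (R := ℤ) a
  have h3 := Nat.cast_choose_three_mul (R := ℤ) b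
  have hb' : (7 : ℤ) ≤ b := by exact_mod_cast hb
  have hba' : (b : ℤ) ^ 2 ≤ 3 * a := by exact_mod_cast hba
  nlinarith [mul_nonneg (sub_nonneg.2 hba') (by nlinarith : (0 : ℤ) ≤ 3 * a + b ^ 2 - 9),
    mul_nonneg (sub_nonneg.2 hb') (by nlinarith : (0 : ℤ) ≤ b ^ 3 - 2 * b ^ 2 + 4 * b + 10)]

section DoublyExponential

variable {R : Type*} [CommRing R] [LinearOrder R] [IsStrictOrderedRing R] {u : ℕ → R} {a c : R}

theorem mul_pow_two_pow_le_of_sq_le_mul_succ (hc : 0 < c) (ha : 0 ≤ a) (h₀ : c * a ≤ u 0)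
    (hu : ∀ n, u n ^ 2 ≤ c * u (n + 1)) (n : ℕ) : c * a ^ 2 ^ n ≤ u n := by
  induction n with
  | zero => simpa using h₀
  | succ n ih =>
    refine le_of_mul_le_mul_left ?_ hc
    calc c * (c * a ^ 2 ^ (n + 1)) = (c * a ^ 2 ^ n) ^ 2 := by ring
      _ ≤ u n ^ 2 := pow_le_pow_left₀ (by positivity) ih 2
      _ ≤ c * u (n + 1) := hu n

theorem le_mul_pow_two_pow_of_mul_succ_le_sq (hc : 0 < c) (hu₀ : ∀ n, 0 ≤ u n)
    (h₀ : u 0 ≤ c * a) (hu : ∀ n, c * u (n + 1) ≤ u n ^ 2) (n : ℕ) : u n ≤ c * a ^ 2 ^ n := by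
  induction n with
  | zero => simpa using h₀
  | succ n ih =>
    refine le_of_mul_le_mul_left ?_ hc
    calc c * u (n + 1) ≤ u n ^ 2 := hu n
      _ ≤ (c * a ^ 2 ^ n) ^ 2 := pow_le_pow_left₀ (hu₀ n) ih 2
      _ = c * (c * a ^ 2 ^ (n + 1)) := by ring

end DoublyExponential

structure EllRecurrence (ℓ : ℕ → ℤ) : Prop where
  zero : ℓ 0 = 3
  succ (n : ℕ) : ℓ (n + 1) =
    1 + ∑ j ∈ range (n + 1), (-1) ^ j * ((ℓ (n - j)).toNat.choose (j + 2) : ℤ)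

namespace EllRecurrence

variable {ℓ : ℕ → ℤ}

theorem initial_values (hℓ : EllRecurrence ℓ) : ℓ 1 = 4 ∧ ℓ 2 = 6 ∧ ℓ 3 = 12 ∧ ℓ 4 = 48 := by
  have h1 : ℓ 1 = 4 := by rw [hℓ.succ]; simp [hℓ.zero, Nat.choose]
  have h2 : ℓ 2 = 6 := by rw [hℓ.succ]; simp [sum_range_succ, hℓ.zero, h1, Nat.choose]
  have h3 : ℓ 3 = 12 := by rw [hℓ.succ]; simp [sum_range_succ, hℓ.zero, h1, h2, Nat.choose]
  have h4 : ℓ 4 = 48 := by rw [hℓ.succ]; simp [sum_range_succ, hℓ.zero, h1, h2, h3, Nat.choose]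
  exact ⟨h1, h2, h3, h4⟩

theorem succ_mem_Icc (hℓ : EllRecurrence ℓ) {n : ℕ} (hnonneg : ∀ m ≤ n, 0 ≤ ℓ m)
    (hsq : ∀ m < n, ℓ m ^ 2 ≤ 3 * ℓ (m + 1)) :
    ℓ (n + 1) ∈ Set.Icc (1 + (ℓ n).toNat.choose 2 - (ℓ (n - 1)).toNat.choose 3 : ℤ)
      (1 + (ℓ n).toNat.choose 2) := by
  have hsq' (j : ℕ) : (ℓ (n - (j + 1))).toNat ^ 2 ≤ 3 * (ℓ (n - j)).toNat := by
    rcases lt_or_ge j n with hj | hj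
    · have h := hsq (n - (j + 1)) (by omega)
      rw [show n - (j + 1) + 1 = n - j by omega,
        ← Int.toNat_of_nonneg (hnonneg (n - (j + 1)) (by omega)),
        ← Int.toNat_of_nonneg (hnonneg (n - j) (by omega))] at h
      exact_mod_cast h
    -- Past the end of the sum both indices truncate to `0`, and `3 ^ 2 ≤ 3 * 3`.
    · simp [show n - (j + 1) = 0 by omega, show n - j = 0 by omega, hℓ.zero]
  have hanti : Antitone fun j ↦ ((ℓ (n - j)).toNat.choose (j + 2) : ℤ) :=
    antitone_nat_of_succ_le fun j ↦ by
      exact_mod_cast Nat.choose_succ_le_choose_of_sq_le (hsq' j) (by omega)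
  obtain ⟨hlow, hup⟩ := hanti.alternating_sum_range_succ_mem_Icc (fun _ ↦ Nat.cast_nonneg _) n
  simp only [Nat.sub_zero, Nat.reduceAdd] at hlow hup
  rw [hℓ.succ]
  constructor <;> linarith

theorem three_le_and_sq_le_three_mul_succ (hℓ : EllRecurrence ℓ) :
    (∀ n, 3 ≤ ℓ n) ∧ ∀ n, ℓ n ^ 2 ≤ 3 * ℓ (n + 1) := by
  obtain ⟨h1, h2, h3, h4⟩ := hℓ.initial_values
  -- The lower bound `t 0 - t 1` of the header is too weak at `(ℓ 2, ℓ 3) = (6, 12)` (it gives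
  -- `ℓ 4 ≥ 47`) but suffices once `ℓ (n - 1) ≥ 7`, hence the induction starts at `n = 4`.
  suffices H : ∀ n ≥ 4,
      (∀ m ≤ n, 3 ≤ ℓ m) ∧ (∀ m < n, ℓ m ^ 2 ≤ 3 * ℓ (m + 1)) ∧ 7 ≤ ℓ (n - 1) from
    ⟨fun m ↦ (H (m + 4) (by omega)).1 m (by omega),
      fun m ↦ (H (m + 4) (by omega)).2.1 m (by omega)⟩
  intro n hn
  induction n, hn using Nat.le_induction with
  | base =>
    refine ⟨fun m hm ↦ ?_, fun m hm ↦ ?_, by simp [h3]⟩ <;>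
      interval_cases m <;> simp [hℓ.zero, h1, h2, h3, h4]
  | succ n hn ih =>
    obtain ⟨hge, hsq, h7⟩ := ih
    have hx := Int.toNat_of_nonneg (by linarith [hge n le_rfl] : 0 ≤ ℓ n)
    have hy := Int.toNat_of_nonneg (by linarith : 0 ≤ ℓ (n - 1))
    have hyx := hsq (n - 1) (by omega)
    rw [Nat.sub_add_cancel (by omega), ← hx, ← hy] at hyx
    have hnew : ℓ n ^ 2 ≤ 3 * ℓ (n + 1) := by
      rw [← hx]
      exact sq_le_three_mul_of_one_add_choose_two_sub_choose_three_le (by omega)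
        (by exact_mod_cast hyx) (hℓ.succ_mem_Icc (fun m hm ↦ by linarith [hge m hm]) hsq).1
    refine ⟨fun m hm ↦ ?_, fun m hm ↦ ?_, ?_⟩
    · rcases (by omega : m ≤ n ∨ m = n + 1) with hm | rfl
      · exact hge m hm
      · nlinarith [hge n le_rfl]
    · rcases (by omega : m < n ∨ m = n) with hm | rfl
      · exact hsq m hm
      · exact hnew
    · rw [Nat.add_sub_cancel, ← hx]
      nlinarith

theorem two_mul_succ_le_sq (hℓ : EllRecurrence ℓ) (n : ℕ) : 2 * ℓ (n + 1) ≤ ℓ n ^ 2 := by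
  obtain ⟨hge, hsq⟩ := hℓ.three_le_and_sq_le_three_mul_succ
  rw [← Int.toNat_of_nonneg (by linarith [hge n] : 0 ≤ ℓ n)]
  exact two_mul_le_sq_of_le_one_add_choose_two (by have := hge n; omega)
    (hℓ.succ_mem_Icc (fun m _ ↦ by linarith [hge m]) fun m _ ↦ hsq m).2

end EllRecurrence

theorem ell_double_exponential (ℓ : ℕ → ℤ) (h0 : ℓ 0 = 3)
    (hrec : ∀ n : ℕ, ℓ (n + 1) =
      1 + ∑ j ∈ Finset.range (n + 1), (-1) ^ j * ((ℓ (n - j)).toNat.choose (j + 2) : ℤ)) :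
    (∀ n : ℕ, 1 ≤ n → 3 * 2 ^ (2 ^ (n - 1)) ≤ ℓ (n + 1)) ∧
      (∀ n : ℕ, ℓ (n + 1) ≤ 2 * 2 ^ (2 ^ n)) := by
  have hℓ : EllRecurrence ℓ := ⟨h0, hrec⟩
  obtain ⟨h1, h2, -, -⟩ := hℓ.initial_values
  obtain ⟨hge, hsq⟩ := hℓ.three_le_and_sq_le_three_mul_succ
  refine ⟨fun n hn ↦ ?_, fun n ↦ ?_⟩
  · obtain ⟨m, rfl⟩ := Nat.exists_eq_add_of_le' hn
    simpa using mul_pow_two_pow_le_of_sq_le_mul_succ (u := fun m ↦ ℓ (m + 2)) three_pos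
      zero_le_two (by simp [h2]) (fun m ↦ hsq (m + 2)) m
  · exact le_mul_pow_two_pow_of_mul_succ_le_sq (u := fun m ↦ ℓ (m + 1)) two_pos
      (fun m ↦ by linarith [hge (m + 1)]) (by simp [h1]) (fun m ↦ hℓ.two_mul_succ_le_sq (m + 1)) n
end

section
/- Define ℓ_n by ℓ_0 = 3 and ℓ_{n+1} = 1 + Σ_{j=0}^{n} (-1)^j * binom(ℓ_{n-j}, j+2), and set ρ_n := (log₂(ℓ_{n+1}) - 1)/2^n. Then ρ_n is strictly decreasing in n and converges to a limit ρ ≥ 0, and for all n ≥ 4, ρ_n ≥ ρ ≥ ρ_n - 1/(2^(n-3) · ln 2 · √ℓ_{n+1}). -/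
open Filter Finset

/-!
The terms `(-1)^j * C(ℓ_{n-j}, j+2)` of the recurrence decrease in absolute value as soon as
`ℓ_m^2 ≤ 3 ℓ_{m+1}`, because `b^2 ≤ 3a` forces `C(b, k+1) ≤ C(a, k)` for `k ≥ 2`. So the
alternating sum lies between its first term and its first two terms,
`1 + C(ℓ_n, 2) - C(ℓ_{n-1}, 3) ≤ ℓ_{n+1} ≤ 1 + C(ℓ_n, 2)`, and these bounds in turn
propagate `ℓ_m^2 ≤ 3 ℓ_{m+1}` by induction. The upper bound gives `2 ℓ_{n+2} < ℓ_{n+1}^2`, which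
is exactly `ρ_{n+1} < ρ_n`. The lower bound, with `ℓ_{n-1}^3 ≤ (3 ℓ_n)^{3/2}`, makes the defect
`log (ℓ_{n+1}^2 / (2 ℓ_{n+2}))` at most `8 / √ℓ_{n+1}`; since `ρ_n - ρ_{n+1}` is this defect
divided by `2^{n+1} ln 2`, summing the geometric tail bounds `ρ_n - ρ`.
-/

theorem Finset.alternating_sum_range_nonneg_and_le {R : Type*} [CommRing R] [LinearOrder R]
    [IsOrderedRing R] (N : ℕ) {a : ℕ → R} (ha : ∀ j, 0 ≤ a j)
    (hanti : ∀ j, j + 1 < N → a (j + 1) ≤ a j) :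
    0 ≤ ∑ j ∈ range N, (-1) ^ j * a j ∧ ∑ j ∈ range N, (-1) ^ j * a j ≤ a 0 := by
  induction N generalizing a with
  | zero => simpa using ha 0
  | succ N ih =>
    obtain ⟨hlo, hhi⟩ := ih (a := fun j => a (j + 1)) (fun j => ha (j + 1))
      (fun j hj => hanti (j + 1) (by omega))
    have hpeel : ∑ j ∈ range (N + 1), (-1) ^ j * a j
        = a 0 - ∑ j ∈ range N, (-1) ^ j * a (j + 1) := by
      simp only [sum_range_succ', pow_succ, mul_neg_one, neg_mul, sum_neg_distrib, pow_zero,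
        one_mul]
      abel
    rw [hpeel]
    refine ⟨sub_nonneg.2 ?_, sub_le_self _ hlo⟩
    rcases N with _ | N
    · simpa using ha 0
    · exact hhi.trans (hanti 0 (by omega))

theorem Nat.choose_add_two_le_choose_add_one {a b k : ℕ} (hba : b ≤ a + 1)
    (h : b.choose (k + 1) ≤ a.choose k) : b.choose (k + 2) ≤ a.choose (k + 1) := by
  have hb := Nat.choose_succ_right_eq b (k + 1)
  have ha := Nat.choose_succ_right_eq a k
  refine Nat.le_of_mul_le_mul_right ?_ (by positivity : 0 < (k + 2) * (k + 1))
  calc b.choose (k + 2) * ((k + 2) * (k + 1)) = b.choose (k + 1) * (b - (k + 1)) * (k + 1) := by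
        rw [← hb]; ring
    _ ≤ a.choose k * (a - k) * (k + 2) := Nat.mul_le_mul (Nat.mul_le_mul h (by omega)) (by omega)
    _ = a.choose (k + 1) * ((k + 2) * (k + 1)) := by rw [← ha]; ring

theorem Nat.choose_three_le_choose_two_of_sq_le_s12 {a b : ℕ} (h : b ^ 2 ≤ 3 * a) :
    b.choose 3 ≤ a.choose 2 := by
  rcases lt_or_ge b 3 with hb | hb
  · simp [Nat.choose_eq_zero_of_lt hb]
  obtain ⟨c, rfl⟩ : ∃ c, b = c + 3 := ⟨b - 3, by omega⟩
  have h9 : 3 ^ 2 ≤ 3 * a := (Nat.pow_le_pow_left hb 2).trans h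
  obtain ⟨d, rfl⟩ : ∃ d, a = d + 1 := ⟨a - 1, by omega⟩
  have hb := Nat.descFactorial_eq_factorial_mul_choose (c + 3) 3
  have ha := Nat.descFactorial_eq_factorial_mul_choose (d + 1) 2
  norm_num [Nat.descFactorial, Nat.factorial, show c + 3 - 2 = c + 1 by omega] at hb ha
  nlinarith [Nat.mul_le_mul_right d h]

theorem Nat.choose_succ_le_choose_of_sq_le_s12 {a b k : ℕ} (h : b ^ 2 ≤ 3 * a) (hk : 2 ≤ k) :
    b.choose (k + 1) ≤ a.choose k := by
  induction k, hk using Nat.le_induction with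
  | base => exact Nat.choose_three_le_choose_two_of_sq_le_s12 h
  | succ k _ ih => exact Nat.choose_add_two_le_choose_add_one (by nlinarith) ih

theorem Int.two_mul_toNat_choose_two {m : ℤ} (hm : 0 ≤ m) :
    2 * (m.toNat.choose 2 : ℤ) = m * (m - 1) := by
  have h : ((m.toNat.descFactorial 2 : ℕ) : ℤ) = m * (m - 1) := by
    rw [Nat.cast_descFactorial_two, Int.toNat_of_nonneg hm]
  rwa [Nat.descFactorial_eq_factorial_mul_choose, Nat.factorial_two, Nat.cast_mul] at h

theorem Int.six_mul_toNat_choose_three_le {m : ℤ} (hm : 0 ≤ m) :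
    6 * (m.toNat.choose 3 : ℤ) ≤ m ^ 3 := by
  have h := Nat.descFactorial_le_pow m.toNat 3
  rw [Nat.descFactorial_eq_factorial_mul_choose] at h
  have h' : ((Nat.factorial 3 * m.toNat.choose 3 : ℕ) : ℤ) ≤ ((m.toNat ^ 3 : ℕ) : ℤ) := by
    exact_mod_cast h
  rwa [Nat.cast_mul, Nat.cast_pow, Int.toNat_of_nonneg hm] at h'

theorem sq_div_two_mul_sub_one_le {c x y : ℝ} (hc : 0 ≤ c) (hx : 1 ≤ x) (hcx : c ^ 2 ≤ 3 * x)
    (hxy : x ^ 2 ≤ 3 * y) (hlow : 6 + 3 * (x * (x - 1)) - c ^ 3 ≤ 6 * y) :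
    x ^ 2 / (2 * y) - 1 ≤ 8 / √x := by
  set s := √x
  have hs1 : 1 ≤ s := Real.one_le_sqrt.2 hx
  have hss : s ^ 2 = x := Real.sq_sqrt (by linarith)
  have hy : 0 < y := by nlinarith
  have hcs : c ≤ 2 * s := by nlinarith
  have hc3 : c ^ 3 ≤ 8 * s ^ 3 := by
    calc c ^ 3 ≤ (2 * s) ^ 3 := pow_le_pow_left₀ hc hcs 3
      _ = 8 * s ^ 3 := by ring
  rw [div_sub_one (by positivity), div_le_div_iff₀ (by positivity) (by positivity)]
  rw [← hss] at hlow hxy ⊢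
  nlinarith [pow_le_pow_left₀ zero_le_one hs1 3]

noncomputable def rhoSeq (x : ℕ → ℝ) (n : ℕ) : ℝ := (Real.logb 2 (x n) - 1) / 2 ^ n

section Rho

variable {x : ℕ → ℝ}

theorem rhoSeq_sub_rhoSeq_succ {k : ℕ} (hk : 0 < x k) (hk1 : 0 < x (k + 1)) :
    rhoSeq x k - rhoSeq x (k + 1) =
      Real.log (x k ^ 2 / (2 * x (k + 1))) / (2 ^ (k + 1) * Real.log 2) := by
  have hl2 : 0 < Real.log 2 := Real.log_pos one_lt_two
  rw [Real.log_div (by positivity) (by positivity), Real.log_mul two_ne_zero hk1.ne',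
    Real.log_pow]
  simp only [rhoSeq, Real.logb]
  field_simp
  ring

theorem rhoSeq_nonneg {k : ℕ} (hk : 2 ≤ x k) : 0 ≤ rhoSeq x k := by
  have h1 : 1 ≤ Real.logb 2 (x k) :=
    (Real.le_logb_iff_rpow_le one_lt_two (by linarith)).2 (by simpa using hk)
  exact div_nonneg (by linarith) (by positivity)

variable (hpos : ∀ k, 0 < x k) (hstep : ∀ k, 2 * x (k + 1) < x k ^ 2)
include hpos hstep

theorem log_sq_div_two_mul_pos (k : ℕ) : 0 < Real.log (x k ^ 2 / (2 * x (k + 1))) :=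
  Real.log_pos ((one_lt_div (by linarith [hpos (k + 1)])).2 (hstep k))

theorem rhoSeq_succ_lt (k : ℕ) : rhoSeq x (k + 1) < rhoSeq x k := by
  rw [← sub_pos, rhoSeq_sub_rhoSeq_succ (hpos k) (hpos (k + 1))]
  have := log_sq_div_two_mul_pos hpos hstep k
  have := Real.log_pos one_lt_two
  positivity

theorem strictAnti_rhoSeq : StrictAnti (rhoSeq x) :=
  strictAnti_nat_of_succ_lt (rhoSeq_succ_lt hpos hstep)

theorem rhoSeq_sub_le_of_tendsto {C ρ : ℝ} (hmono : Monotone x)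
    (hgap : ∀ k, Real.log (x k ^ 2 / (2 * x (k + 1))) ≤ C / √(x k))
    (hlim : Tendsto (rhoSeq x) atTop (nhds ρ)) (n : ℕ) :
    rhoSeq x n - C / (2 ^ n * Real.log 2 * √(x n)) ≤ ρ := by
  have hl2 : 0 < Real.log 2 := Real.log_pos one_lt_two
  have hsn : 0 < √(x n) := Real.sqrt_pos.2 (hpos n)
  have hC : 0 < C := by
    have := (log_sq_div_two_mul_pos hpos hstep n).trans_le (hgap n)
    exact (div_pos_iff_of_pos_right hsn).1 this
  set D := C / (2 ^ n * Real.log 2 * √(x n))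
  have hdist : ∀ k, dist (rhoSeq x (k + n)) (rhoSeq x (k + 1 + n)) ≤ D / 2 / 2 ^ k := by
    intro k
    rw [show k + 1 + n = k + n + 1 by ring, Real.dist_eq,
      abs_of_pos (sub_pos.2 (rhoSeq_succ_lt hpos hstep _)),
      rhoSeq_sub_rhoSeq_succ (hpos _) (hpos _)]
    have hsk : √(x n) ≤ √(x (k + n)) := Real.sqrt_le_sqrt (hmono (by omega))
    calc Real.log (x (k + n) ^ 2 / (2 * x (k + n + 1))) / (2 ^ (k + n + 1) * Real.log 2)
        ≤ C / √(x (k + n)) / (2 ^ (k + n + 1) * Real.log 2) := by gcongr; exact hgap _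
      _ ≤ C / √(x n) / (2 ^ (k + n + 1) * Real.log 2) := by gcongr
      _ = D / 2 / 2 ^ k := by simp only [D]; field_simp; ring
  have h := dist_le_of_le_geometric_two_of_tendsto₀ hdist
    ((tendsto_add_atTop_iff_nat n).2 hlim)
  rw [zero_add, Real.dist_eq] at h
  linarith [le_abs_self (rhoSeq x n - ρ)]

end Rho

section Recurrence

variable {ℓ : ℕ → ℤ}
  (hrec : ∀ n : ℕ, ℓ (n + 1) =
    1 + ∑ j ∈ range (n + 1), (-1) ^ j * ((ℓ (n - j)).toNat.choose (j + 2) : ℤ))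

include hrec in
theorem ell_succ_bounds_choose (n : ℕ)
    (hsq : ∀ m, m + 2 ≤ n → 0 ≤ ℓ m ∧ ℓ m ^ 2 ≤ 3 * ℓ (m + 1)) :
    1 + ((ℓ n).toNat.choose 2 : ℤ) - ((ℓ (n - 1)).toNat.choose 3 : ℤ) ≤ ℓ (n + 1) ∧
      ℓ (n + 1) ≤ 1 + ((ℓ n).toNat.choose 2 : ℤ) := by
  set a : ℕ → ℤ := fun j => ((ℓ (n - (j + 1))).toNat.choose (j + 3) : ℤ) with ha
  have hpeel : ℓ (n + 1) = 1 + (ℓ n).toNat.choose 2 - ∑ j ∈ range n, (-1) ^ j * a j := by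
    simp only [hrec, Int.reduceNeg, sum_range_succ', pow_succ, mul_neg, mul_one, neg_mul,
      sum_neg_distrib, pow_zero, tsub_zero, zero_add, one_mul, ha]
    ring
  have hanti : ∀ j, j + 1 < n → a (j + 1) ≤ a j := by
    intro j hj
    obtain ⟨hpos, hsq⟩ := hsq (n - (j + 2)) (by omega)
    have hsq' : (ℓ (n - (j + 2))).toNat ^ 2 ≤ 3 * (ℓ (n - (j + 2) + 1)).toNat := by
      zify
      rw [Int.toNat_of_nonneg hpos, Int.toNat_of_nonneg (by nlinarith)]
      exact hsq
    simp only [ha, show n - (j + 1) = n - (j + 2) + 1 by omega]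
    exact_mod_cast Nat.choose_succ_le_choose_of_sq_le_s12 hsq' (by omega : 2 ≤ j + 3)
  obtain ⟨hlo, hhi⟩ :=
    alternating_sum_range_nonneg_and_le n (fun j => Int.natCast_nonneg _) hanti
  exact ⟨by rw [hpeel]; linarith, by rw [hpeel]; linarith⟩

include hrec in
theorem ell_add_two_ge (n : ℕ) (hsq : ∀ m ≤ n, 0 ≤ ℓ m ∧ ℓ m ^ 2 ≤ 3 * ℓ (m + 1)) :
    6 + 3 * (ℓ (n + 1) * (ℓ (n + 1) - 1)) - ℓ n ^ 3 ≤ 6 * ℓ (n + 2) := by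
  obtain ⟨hn, hn1⟩ := hsq n le_rfl
  have hlow := (ell_succ_bounds_choose hrec (n + 1) fun m hm => hsq m (by omega)).1
  have h2 := Int.two_mul_toNat_choose_two (m := ℓ (n + 1)) (by nlinarith)
  have h3 := Int.six_mul_toNat_choose_three_le hn
  rw [Nat.add_sub_cancel] at hlow
  linarith

variable (h0 : ℓ 0 = 3)
include h0 hrec

theorem ell_one_to_four : ℓ 1 = 4 ∧ ℓ 2 = 6 ∧ ℓ 3 = 12 ∧ ℓ 4 = 48 := by
  have h1 : ℓ 1 = 4 := by rw [hrec]; simp [h0]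
  have h2 : ℓ 2 = 6 := by rw [hrec]; simp [sum_range_succ, h0, h1, Nat.choose]
  have h3 : ℓ 3 = 12 := by rw [hrec]; simp [sum_range_succ, h0, h1, h2, Nat.choose]
  have h4 : ℓ 4 = 48 := by rw [hrec]; simp [sum_range_succ, h0, h1, h2, h3, Nat.choose]
  exact ⟨h1, h2, h3, h4⟩

theorem ell_invariant (n : ℕ) : 3 ≤ ℓ n ∧ (3 ≤ n → 12 ≤ ℓ n) ∧ ℓ n ^ 2 ≤ 3 * ℓ (n + 1) := by
  obtain ⟨h1, h2, h3, h4⟩ := ell_one_to_four hrec h0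
  induction n using Nat.strong_induction_on with
  | _ n ih =>
  match n with
  | 0 => simp [h0, h1]
  | 1 => simp [h1, h2]
  | 2 => simp [h2, h3]
  | 3 => simp [h3, h4]
  | p + 4 =>
    have hc : 12 ≤ ℓ (p + 3) := (ih (p + 3) (by omega)).2.1 (by omega)
    have hcsq : ℓ (p + 3) ^ 2 ≤ 3 * ℓ (p + 4) := (ih (p + 3) (by omega)).2.2
    have hlow : 6 + 3 * (ℓ (p + 4) * (ℓ (p + 4) - 1)) - ℓ (p + 3) ^ 3 ≤ 6 * ℓ (p + 5) :=
      ell_add_two_ge hrec (p + 3) fun m hm =>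
        ⟨by linarith [(ih m (by omega)).1], (ih m (by omega)).2.2⟩
    have hL : 48 ≤ ℓ (p + 4) := by nlinarith
    refine ⟨by omega, fun _ => by omega, ?_⟩
    nlinarith [mul_le_mul hcsq hcsq (by positivity) (by omega),
      pow_le_pow_left₀ (by norm_num) hc 3]

theorem three_le_ell (n : ℕ) : 3 ≤ ℓ n := (ell_invariant hrec h0 n).1

theorem ell_sq_le (n : ℕ) : ℓ n ^ 2 ≤ 3 * ℓ (n + 1) := (ell_invariant hrec h0 n).2.2

theorem monotone_ell : Monotone ℓ :=
  monotone_nat_of_le_succ fun n => by nlinarith [three_le_ell hrec h0 n, ell_sq_le hrec h0 n]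

theorem two_mul_ell_succ_lt_sq (n : ℕ) : 2 * ℓ (n + 1) < ℓ n ^ 2 := by
  have hn := three_le_ell hrec h0 n
  have hup := (ell_succ_bounds_choose hrec n fun m _ =>
    ⟨by linarith [three_le_ell hrec h0 m], ell_sq_le hrec h0 m⟩).2
  have h2 := Int.two_mul_toNat_choose_two (m := ℓ n) (by omega)
  nlinarith

theorem log_sq_div_two_mul_ell_le (k : ℕ) :
    Real.log ((ℓ (k + 1) : ℝ) ^ 2 / (2 * ℓ (k + 2))) ≤ 8 / √(ℓ (k + 1) : ℝ) := by
  have hc : (0 : ℝ) ≤ ℓ k := by exact_mod_cast (three_le_ell hrec h0 k).trans' (by norm_num)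
  have hx : (1 : ℝ) ≤ ℓ (k + 1) := by
    exact_mod_cast (three_le_ell hrec h0 (k + 1)).trans' (by norm_num)
  have hy : (0 : ℝ) < ℓ (k + 2) := by
    exact_mod_cast (three_le_ell hrec h0 (k + 2)).trans_lt' (by norm_num)
  have hlow : 6 + 3 * ((ℓ (k + 1) : ℝ) * (ℓ (k + 1) - 1)) - (ℓ k : ℝ) ^ 3 ≤ 6 * ℓ (k + 2) := by
    exact_mod_cast ell_add_two_ge hrec k fun m _ =>
      ⟨(three_le_ell hrec h0 m).trans' (by norm_num), ell_sq_le hrec h0 m⟩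
  refine (Real.log_le_sub_one_of_pos (by positivity)).trans
    (sq_div_two_mul_sub_one_le hc hx ?_ ?_ hlow) <;> exact_mod_cast ell_sq_le hrec h0 _

end Recurrence

theorem rho_decreasing_and_converges (ℓ : ℕ → ℤ) (h0 : ℓ 0 = 3)
    (hrec : ∀ n : ℕ, ℓ (n + 1) =
      1 + ∑ j ∈ Finset.range (n + 1), (-1) ^ j * ((ℓ (n - j)).toNat.choose (j + 2) : ℤ))
    (ρseq : ℕ → ℝ)
    (hρ : ∀ n : ℕ, ρseq n = (Real.logb 2 (ℓ (n + 1) : ℝ) - 1) / 2 ^ n) :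
    StrictAnti ρseq ∧
      ∃ ρ : ℝ, 0 ≤ ρ ∧ Tendsto ρseq atTop (nhds ρ) ∧
        ∀ n : ℕ, 4 ≤ n →
          ρ ≤ ρseq n ∧
            ρseq n - 1 / (2 ^ (n - 3) * Real.log 2 * Real.sqrt (ℓ (n + 1) : ℝ)) ≤ ρ := by
  set x : ℕ → ℝ := fun k => (ℓ (k + 1) : ℝ)
  obtain rfl : ρseq = rhoSeq x := funext hρ
  have hx3 (k : ℕ) : 3 ≤ x k := by simp only [x]; exact_mod_cast three_le_ell hrec h0 (k + 1)
  have hpos (k : ℕ) : 0 < x k := by linarith [hx3 k]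
  have hstep (k : ℕ) : 2 * x (k + 1) < x k ^ 2 := by
    simp only [x]; exact_mod_cast two_mul_ell_succ_lt_sq hrec h0 (k + 1)
  have hmono : Monotone x := fun a b hab => by
    simp only [x]; exact_mod_cast monotone_ell hrec h0 (Nat.succ_le_succ hab)
  have hnonneg (k : ℕ) : 0 ≤ rhoSeq x k := rhoSeq_nonneg (by linarith [hx3 k])
  have hanti := strictAnti_rhoSeq hpos hstep
  have hbdd : BddBelow (Set.range (rhoSeq x)) := ⟨0, by rintro _ ⟨k, rfl⟩; exact hnonneg k⟩
  have hlim := tendsto_atTop_ciInf hanti.antitone hbdd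
  refine ⟨hanti, _, le_ciInf hnonneg, hlim, fun n hn => ⟨ciInf_le hbdd n, ?_⟩⟩
  obtain ⟨m, rfl⟩ : ∃ m, n = m + 3 := ⟨n - 3, by omega⟩
  convert rhoSeq_sub_le_of_tendsto hpos hstep hmono (log_sq_div_two_mul_ell_le hrec h0) hlim
    (m + 3) using 2
  rw [Nat.add_sub_cancel, pow_add]
  field_simp
  norm_num [x]
end

section
/- Define ℓ_n by ℓ_0 = 3 and ℓ_{n+1} = 1 + Σ_{j=0}^{n} (-1)^j · binom(ℓ_{n-j}, j+2), and extend by ℓ_{-3} = 0, ℓ_{-2} = 0, ℓ_{-1} = 2. Then for all d ≥ 4, the quantity Σ_{j=1}^{d} (-1)^(d-j) · C(ℓ_{j-3} + 1, d - j + 2) equals ℓ_{d-2}, where C is the polynomial binomial coefficient. -/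
/-!
Write `k = d - j`. The terms with `ℓ_{-2} = 0` and `ℓ_{-1} = 2` vanish, since `C(1, r) = 0`
and `C(3, r) = 0` for `r ≥ 4`. Pascal's rule `C(m + 1, k + 2) = C(m, k + 1) + C(m, k + 2)` splits
the rest into two alternating sums: one is the sum of the recurrence for `ℓ_{d-2}`, the other,
after a shift of the index, is `ℓ_{d-3}` minus the sum of the recurrence for `ℓ_{d-3}`. Hence the
total is `(ℓ_{d-2} - 1) + ℓ_{d-3} - (ℓ_{d-3} - 1) = ℓ_{d-2}`.

The recurrence is stated through `Int.toNat`, so this needs `ℓ_n ≥ 0`. That comes from growth: if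
`ℓ_m ≤ ℓ_{m+1}` and `2 C(ℓ_m, 3) ≤ C(ℓ_{m+1}, 2)` for all `m < n`, the terms `C(ℓ_{n-j}, j + 2)` of
the recurrence decrease in `j`, so the alternating sum is at least its first term minus its second,
hence `2 (ℓ_{n+1} - 1) ≥ C(ℓ_n, 2)`, which gives back the growth condition at `n` once `ℓ_n ≥ 9`;
`ℓ_0, …, ℓ_3 = 3, 4, 6, 12` start the induction.
-/

/-- The polynomial binomial coefficient `C(m, r) = (1/r!) * ∏_{j=0}^{r-1} (m - j)`. -/
noncomputable def pbc (m : ℚ) (r : ℕ) : ℚ :=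
  (∏ j ∈ Finset.range r, (m - j)) / (r.factorial : ℚ)

open Finset

theorem pbc_natCast (n r : ℕ) : pbc n r = n.choose r := by
  rw [pbc, Nat.cast_choose_eq_descPochhammer_div, descPochhammer_eval_eq_prod_range]

theorem alternating_sum_mem_Icc {R : Type*} [CommRing R] [LinearOrder R] [IsStrictOrderedRing R] :
    ∀ (n : ℕ) (t : ℕ → R), (∀ j < n, t (j + 1) ≤ t j) → (∀ j, 0 ≤ t j) →
      ∑ j ∈ range (n + 1), (-1) ^ j * t j ∈ Set.Icc (t 0 - t 1) (t 0)
  | 0, t, _, hnonneg => by simpa using hnonneg 1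
  | n + 1, t, hanti, hnonneg => by
    obtain ⟨hlo, hhi⟩ := alternating_sum_mem_Icc n (fun j => t (j + 1))
      (fun j hj => hanti (j + 1) (by omega)) (fun j => hnonneg (j + 1))
    simp only [zero_add] at hlo hhi
    have htail_nonneg : 0 ≤ ∑ j ∈ range (n + 1), (-1) ^ j * t (j + 1) := by
      rcases n with _ | n
      · simpa using hnonneg 1
      · linarith [hlo, hanti 1 (by omega)]
    rw [sum_range_succ']
    simp only [pow_succ, mul_neg_one, neg_mul, sum_neg_distrib, pow_zero, one_mul]
    constructor <;> linarith

theorem Nat.choose_succ_le_choose_of_le {a b k₀ k : ℕ} (hba : b ≤ a)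
    (h₀ : b.choose (k₀ + 1) ≤ a.choose k₀) (hk : k₀ ≤ k) : b.choose (k + 1) ≤ a.choose k := by
  induction k, hk using Nat.le_induction with
  | base => exact h₀
  | succ k _ ih =>
    refine Nat.le_of_mul_le_mul_right (c := (k + 1) * (k + 2)) ?_ (by positivity)
    calc b.choose (k + 2) * ((k + 1) * (k + 2))
        = b.choose (k + 1) * (b - (k + 1)) * (k + 1) := by
          rw [← Nat.choose_succ_right_eq]; ring
      _ ≤ a.choose k * (a - k) * (k + 2) := by
          rw [mul_assoc, mul_assoc]
          exact Nat.mul_le_mul ih (Nat.mul_le_mul (by omega) (by omega))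
      _ = a.choose (k + 1) * ((k + 1) * (k + 2)) := by
          rw [← Nat.choose_succ_right_eq]; ring

/-- The growth condition on consecutive terms `(ℓ_m, ℓ_{m+1})`. -/
def Grows (b c : ℕ) : Prop := b ≤ c ∧ 2 * b.choose 3 ≤ c.choose 2

theorem Grows.choose_succ_le {b c k : ℕ} (h : Grows b c) (hk : 2 ≤ k) :
    b.choose (k + 1) ≤ c.choose k :=
  Nat.choose_succ_le_choose_of_le h.1 ((Nat.le_mul_of_pos_left _ two_pos).trans h.2) hk

theorem grows_of_choose_two_add_two_le {b c : ℕ} (hb : 9 ≤ b) (h : b.choose 2 + 2 ≤ 2 * c) :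
    Grows b c ∧ 9 ≤ c := by
  have hb' : (9 : ℚ) ≤ b := by exact_mod_cast hb
  have h' : (b : ℚ) * (b - 1) / 2 + 2 ≤ 2 * c := by
    rw [← Nat.cast_choose_two]; exact_mod_cast h
  have hbc : (b : ℚ) ≤ c := by nlinarith
  refine ⟨⟨by exact_mod_cast hbc, ?_⟩, by exact_mod_cast hb'.trans hbc⟩
  rw [← Nat.cast_le (α := ℚ)]
  push_cast
  rw [← pbc_natCast, ← pbc_natCast]
  simp only [pbc, prod_range_succ, prod_range_zero]
  -- With `x = C(b, 2) / 2 ≤ c - 1`: `C(c, 2) ≥ x (x + 1) / 2 ≥ 4 x (b - 2) / 3 = 2 C(b, 3)`,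
  -- the middle step being `3 b² - 35 b + 76 ≥ 0`, true for `b ≥ 9`.
  set x : ℚ := b * (b - 1) / 4 with hxdef
  have hx : 0 ≤ x := by rw [hxdef]; nlinarith
  have hcx : x + 1 ≤ c := by rw [hxdef]; linarith
  have hquad : 8 * (b - 2) ≤ 3 * (x + 1) := by nlinarith
  nlinarith [mul_nonneg (sub_nonneg.2 hcx) (by linarith : (0 : ℚ) ≤ c + x),
    mul_le_mul_of_nonneg_left hquad hx]

/-- For `ℓ` with values in `ℕ`, the recurrence reads `ℓ (n + 1) = 1 + altChooseSum ℓ n`. -/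
def altChooseSum (a : ℕ → ℕ) (n : ℕ) : ℤ :=
  ∑ j ∈ range (n + 1), (-1) ^ j * ((a (n - j)).choose (j + 2) : ℤ)

theorem choose_two_le_two_mul_altChooseSum (a : ℕ → ℕ) {n : ℕ} (hn : 1 ≤ n)
    (hgrows : ∀ m < n, Grows (a m) (a (m + 1))) :
    ((a n).choose 2 : ℤ) ≤ 2 * altChooseSum a n := by
  have hanti : ∀ j < n,
      ((a (n - (j + 1))).choose (j + 1 + 2) : ℤ) ≤ (a (n - j)).choose (j + 2) := by
    intro j hj
    have := (hgrows (n - (j + 1)) (by omega)).choose_succ_le (k := j + 2) (by omega)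
    rw [show n - (j + 1) + 1 = n - j by omega] at this
    exact_mod_cast this
  have hlo := (alternating_sum_mem_Icc n (fun j => ((a (n - j)).choose (j + 2) : ℤ)) hanti
    (fun j => by positivity)).1
  have hhalf : 2 * ((a (n - 1)).choose 3 : ℤ) ≤ (a n).choose 2 := by
    have := (hgrows (n - 1) (by omega)).2
    rw [Nat.sub_add_cancel hn] at this
    exact_mod_cast this
  simp only [Nat.sub_zero] at hlo
  rw [altChooseSum]
  linarith

theorem ell_growth (u : ℕ → ℤ) (h0 : u 0 = 3)
    (hrec : ∀ n, u (n + 1) = 1 + altChooseSum (fun m => (u m).toNat) n) {n : ℕ} (hn : 3 ≤ n) :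
    (∀ m ≤ n, 0 ≤ u m) ∧ (∀ m < n, Grows (u m).toNat (u (m + 1)).toNat) ∧ 9 ≤ (u n).toNat := by
  induction n, hn using Nat.le_induction with
  | base =>
    have h1 : u 1 = 4 := by rw [hrec]; simp [altChooseSum, h0]
    have h2 : u 2 = 6 := by rw [hrec]; simp [altChooseSum, sum_range_succ, h0, h1, Nat.choose]
    have h3 : u 3 = 12 := by rw [hrec]; simp [altChooseSum, sum_range_succ, h0, h1, h2, Nat.choose]
    refine ⟨fun m hm => ?_, fun m hm => ?_, by simp [h3]⟩
    · interval_cases m <;> simp [h0, h1, h2, h3]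
    · interval_cases m <;> simp [h0, h1, h2, h3, Grows] <;> decide
  | succ n hn ih =>
    obtain ⟨hnonneg, hgrows, h9⟩ := ih
    have hsum := choose_two_le_two_mul_altChooseSum _ (by omega) hgrows
    have hpos : 0 ≤ u (n + 1) := by
      have : (0 : ℤ) ≤ (u n).toNat.choose 2 := by positivity
      rw [hrec]; linarith
    have hbound : ((u n).toNat.choose 2 : ℤ) + 2 ≤ 2 * ((u (n + 1)).toNat : ℤ) := by
      rw [Int.toNat_of_nonneg hpos, hrec n]; linarith
    obtain ⟨hg, h9'⟩ := grows_of_choose_two_add_two_le h9 (by exact_mod_cast hbound)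
    refine ⟨fun m hm => ?_, fun m hm => ?_, h9'⟩
    · rcases (show m ≤ n ∨ m = n + 1 by omega) with hm | rfl
      exacts [hnonneg m hm, hpos]
    · rcases (show m < n ∨ m = n by omega) with hm | rfl
      exacts [hgrows m hm, hg]

theorem sum_alternating_choose_succ (f : ℕ → ℕ) (n : ℕ) :
    ∑ k ∈ range (n + 2), (-1) ^ k * ((f (n + 1 - k) + 1).choose (k + 2) : ℤ) =
      f (n + 1) - altChooseSum f n + altChooseSum f (n + 1) := by
  simp only [Nat.choose_succ_succ', Nat.cast_add, mul_add, sum_add_distrib]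
  rw [altChooseSum, altChooseSum, sum_range_succ']
  simp [pow_succ, add_assoc]
  ring

theorem ell_nonneg (u : ℕ → ℤ) (h0 : u 0 = 3)
    (hrec : ∀ n, u (n + 1) = 1 + altChooseSum (fun m => (u m).toNat) n) (n : ℕ) : 0 ≤ u n :=
  (ell_growth u h0 hrec (le_max_right n 3)).1 n (le_max_left n 3)

theorem sum_pbc_eq_sum_choose (ℓ : ℤ → ℤ) (hm2 : ℓ (-2) = 0) (hm1 : ℓ (-1) = 2)
    (hnonneg : ∀ n : ℕ, 0 ≤ ℓ n) (e : ℕ) :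
    ∑ j ∈ Icc 1 (e + 4), (-1) ^ (e + 4 - j) * pbc ((ℓ ((j : ℤ) - 3) : ℚ) + 1) (e + 4 - j + 2) =
      ((∑ k ∈ range (e + 2), (-1) ^ k * (((ℓ (e + 1 - k : ℕ)).toNat + 1).choose (k + 2) : ℤ) :
        ℤ) : ℚ) := by
  set F : ℕ → ℚ := fun k => (-1) ^ k * pbc ((ℓ ((e + 1 : ℤ) - k) : ℚ) + 1) (k + 2) with hF
  have hreflect : ∑ j ∈ Icc 1 (e + 4),
      (-1) ^ (e + 4 - j) * pbc ((ℓ ((j : ℤ) - 3) : ℚ) + 1) (e + 4 - j + 2) =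
      ∑ j ∈ Ico 1 (e + 4 + 1), F (e + 4 - j) := by
    refine sum_congr rfl fun j hj => ?_
    have hidx : (e + 1 : ℤ) - ((e + 4 - j : ℕ) : ℤ) = j - 3 := by
      rw [mem_Ico] at hj
      omega
    simp only [hF, hidx]
  rw [hreflect, sum_Ico_reflect F 1 le_rfl, Nat.add_sub_cancel, Nat.sub_self, ← range_eq_Ico,
    sum_range_succ, sum_range_succ]
  have hvanish : F (e + 2) + F (e + 3) = 0 := by
    have hidx2 : (e + 1 : ℤ) - ((e + 2 : ℕ) : ℤ) = -1 := by omega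
    have hidx3 : (e + 1 : ℤ) - ((e + 3 : ℕ) : ℤ) = -2 := by omega
    simp only [hF, hidx2, hidx3, hm1, hm2]
    rw [show ((2 : ℤ) : ℚ) + 1 = (3 : ℕ) by norm_num, show ((0 : ℤ) : ℚ) + 1 = (1 : ℕ) by norm_num,
      pbc_natCast, pbc_natCast, Nat.choose_eq_zero_of_lt (by omega),
      Nat.choose_eq_zero_of_lt (by omega)]
    simp
  rw [add_assoc, hvanish, add_zero]
  push_cast
  refine sum_congr rfl fun k hk => ?_
  rw [mem_range] at hk
  have hidx : (e + 1 : ℤ) - k = ((e + 1 - k : ℕ) : ℤ) := by omega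
  have hcast : (ℓ (e + 1 - k : ℕ) : ℚ) + 1 = (((ℓ (e + 1 - k : ℕ)).toNat + 1 : ℕ) : ℚ) := by
    rw [Nat.cast_add_one]
    exact_mod_cast congrArg (fun z : ℤ => (z : ℚ) + 1) (Int.toNat_of_nonneg (hnonneg _)).symm
  simp only [hF, hidx, hcast, pbc_natCast]

theorem alt_sum_eq_ell_general (ℓ : ℤ → ℤ)
    (hm2 : ℓ (-2) = 0) (hm1 : ℓ (-1) = 2) (h0 : ℓ 0 = 3)
    (hrec : ∀ n : ℕ, ℓ (n + 1) =
      1 + ∑ j ∈ Finset.range (n + 1), (-1) ^ j * ((ℓ ((n : ℤ) - j)).toNat.choose (j + 2) : ℤ))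
    (d : ℕ) (hd : 4 ≤ d) :
    ∑ j ∈ Finset.Icc 1 d, (-1) ^ (d - j) * pbc ((ℓ ((j : ℤ) - 3) : ℚ) + 1) (d - j + 2) =
      (ℓ ((d : ℤ) - 2) : ℚ) := by
  obtain ⟨e, rfl⟩ : ∃ e, d = e + 4 := ⟨d - 4, by omega⟩
  set a : ℕ → ℕ := fun m => (ℓ m).toNat
  have hrec' : ∀ n : ℕ, ℓ (n + 1 : ℕ) = 1 + altChooseSum a n := fun n => by
    rw [Nat.cast_succ, hrec n, altChooseSum]
    congr 1
    refine sum_congr rfl fun j hj => ?_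
    rw [← Nat.cast_sub (Nat.lt_succ_iff.mp (mem_range.mp hj))]
  have hnonneg : ∀ n : ℕ, 0 ≤ ℓ n := ell_nonneg (fun n => ℓ n) h0 hrec'
  have ha : (a (e + 1) : ℤ) = ℓ (e + 1 : ℕ) := Int.toNat_of_nonneg (hnonneg _)
  rw [sum_pbc_eq_sum_choose ℓ hm2 hm1 hnonneg e, sum_alternating_choose_succ a, ha,
    show ((e + 4 : ℕ) : ℤ) - 2 = (e + 1 + 1 : ℕ) by omega, hrec' (e + 1), hrec' e]
  push_cast
  ring

theorem alt_sum_eq_ell (ℓ : ℤ → ℤ)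
    (hm3 : ℓ (-3) = 0) (hm2 : ℓ (-2) = 0) (hm1 : ℓ (-1) = 2) (h0 : ℓ 0 = 3)
    (hrec : ∀ n : ℕ, ℓ (n + 1) =
      1 + ∑ j ∈ Finset.range (n + 1), (-1) ^ j * ((ℓ ((n : ℤ) - j)).toNat.choose (j + 2) : ℤ))
    (d : ℕ) (hd : 4 ≤ d) :
    ∑ j ∈ Finset.Icc 1 d, (-1) ^ (d - j) * pbc ((ℓ ((j : ℤ) - 3) : ℚ) + 1) (d - j + 2) =
      (ℓ ((d : ℤ) - 2) : ℚ) :=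
  alt_sum_eq_ell_general ℓ hm2 hm1 h0 hrec d hd
end
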